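/- Let t ≥ 4 be even, let A ⊆ {1,…,t} be a nonempty union of ρ pairwise nonadjacent intervals [i_1,j_1], …, [i_ρ,j_ρ] (j_k + 2 ≤ i_{k+1}) with 1 ∉ A and t ∉ A. Let R be the distinguished symmetric cycle on {1,−1}^t and W(R) its subtope matrix. Then _{−A}T^{(+)} = x̄·W(R) where x̄ = P(t)^1 + Σ_{k=1}^{ρ} P(t)^{j_k+1} − Σ_{ℓ=1}^{ρ} P(t)^{i_ℓ}. -/

import Mathlib

/-!
Row `m` of `P(t) W(R)` is the cycle vector `R^m`: since `W(R)_{kj}` is the sign of `j - k`, the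
entry `(P(t) W(R))_{mj}` is a combination of partial sums of the alternating row `P(t)^m`, which
have a closed form; evenness of `t` makes the full row sum come out right. Hence
`x̄ W(R) = R^0 + Σ_k (R^{j_k} - R^{i_k - 1})`, and `R^{j} - R^{i-1}` is `-2` exactly on the
coordinates `c` with `c + 1 ∈ [i, j]`. The intervals being disjoint, the sum is `-2` on `A` and
`0` off it.
-/

def Pmat (t : ℕ) : Matrix (Fin t) (Fin t) ℝ :=
  Matrix.of fun i j =>
    if (i : ℕ) ≤ (j : ℕ) then (-1 : ℝ) ^ ((i : ℕ) + (j : ℕ))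
    else (-1 : ℝ) ^ ((i : ℕ) + (j : ℕ) + 1)

def Rcyc (t : ℕ) : ℕ → Fin t → ℝ := fun s i =>
  if s < t then (if (i : ℕ) < s then -1 else 1)
  else (if (i : ℕ) < s - t then 1 else -1)

noncomputable def Wmat (t : ℕ) : Matrix (Fin t) (Fin t) ℝ :=
  Matrix.of fun (k : Fin t) (j : Fin t) =>
    (Rcyc t (k : ℕ) j + Rcyc t ((k : ℕ) + 1) j) / 2

open Finset Matrix

theorem sum_range_ite_lt {M : Type*} [AddCommMonoid M] (f : ℕ → M) {j n : ℕ} (h : j ≤ n) :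
    ∑ k ∈ range n, (if k < j then f k else 0) = ∑ k ∈ range j, f k := by
  rw [← sum_filter, range_eq_Ico, Ico_filter_lt, min_eq_right h, ← range_eq_Ico]

theorem sum_ite_eq_ite_exists {ι M : Type*} [Fintype ι] [AddCommMonoid M] (p : ι → Prop)
    [DecidablePred p] [Decidable (∃ i, p i)] (hp : ∀ i j, p i → p j → i = j) (a : M) :
    ∑ i, (if p i then a else 0) = if ∃ i, p i then a else 0 := by
  split_ifs with h
  · obtain ⟨i, hi⟩ := h
    rw [Fintype.sum_eq_single i fun j hj => if_neg fun hpj => hj (hp j i hpj hi), if_pos hi]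
  · exact Fintype.sum_eq_zero _ fun i => if_neg fun hi => h ⟨i, hi⟩

def pEntry (m k : ℕ) : ℝ := if m ≤ k then (-1) ^ (m + k) else (-1) ^ (m + k + 1)

theorem Pmat_apply {t : ℕ} (m k : Fin t) : Pmat t m k = pEntry m k := rfl

theorem sum_range_pEntry (m n : ℕ) :
    ∑ k ∈ range n, pEntry m k = (-1) ^ m * ((-1) ^ min n m - (1 + (-1) ^ n) / 2) := by
  induction n with
  | zero => norm_num
  | succ n ih =>
    rw [sum_range_succ, ih, pEntry]
    rcases lt_or_ge n m with h | h
    · rw [if_neg (by omega), min_eq_left h.le, min_eq_left (by omega)]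
      ring
    · rw [if_pos h, min_eq_right h, min_eq_right (by omega)]
      ring

theorem Rcyc_of_le {t s : ℕ} (hs : s ≤ t) (j : Fin t) :
    Rcyc t s j = if (j : ℕ) < s then -1 else 1 := by
  have := j.isLt
  unfold Rcyc
  split_ifs <;> first | rfl | (exfalso; omega)

-- `W(R)_{kj}` is the sign of `j - k`, written so that `P W` splits into partial row sums of `P`.
theorem Wmat_apply {t : ℕ} (k j : Fin t) :
    Wmat t k j = (if (k : ℕ) < j then 1 else 0) + (if (k : ℕ) < j + 1 then 1 else 0) - 1 := by
  rw [Wmat, of_apply, Rcyc_of_le k.isLt.le, Rcyc_of_le k.isLt]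
  split_ifs <;> first | omega | norm_num

theorem Pmat_mul_Wmat {t : ℕ} (ht : Even t) :
    Pmat t * Wmat t = of fun (m : Fin t) j => Rcyc t m j := by
  ext m j
  have hjt := j.isLt
  have hsq : ((-1 : ℝ) ^ (m : ℕ)) ^ 2 = 1 := by rw [← pow_mul, pow_mul']; norm_num
  simp only [mul_apply, of_apply, Pmat_apply, Wmat_apply, Rcyc_of_le m.isLt.le, mul_sub, mul_add,
    mul_ite, mul_one, mul_zero]
  rw [sum_sub_distrib, sum_add_distrib]
  rw [Fin.sum_univ_eq_sum_range (fun k => if k < (j : ℕ) then pEntry m k else 0),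
    Fin.sum_univ_eq_sum_range (fun k => if k < (j : ℕ) + 1 then pEntry m k else 0),
    Fin.sum_univ_eq_sum_range (pEntry m), sum_range_ite_lt _ hjt.le,
    sum_range_ite_lt _ (show (j : ℕ) + 1 ≤ t from hjt),
    sum_range_pEntry, sum_range_pEntry, sum_range_pEntry, min_eq_right m.isLt.le, ht.neg_one_pow]
  rcases lt_or_ge (j : ℕ) m with h | h
  · rw [if_pos h, min_eq_left h.le, min_eq_left h]
    linear_combination (-1 : ℝ) * hsq
  · rw [if_neg h.not_gt, min_eq_right h, min_eq_right (by omega)]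
    linear_combination hsq

theorem Pmat_row_vecMul_Wmat {t : ℕ} (ht : Even t) (m : Fin t) :
    Pmat t m ᵥ* Wmat t = Rcyc t m :=
  funext fun c => by
    simpa [mul_apply, vecMul, dotProduct] using congr_fun₂ (Pmat_mul_Wmat ht) m c

theorem Rcyc_sub_Rcyc {t a b : ℕ} (hab : a ≤ b) (hb : b ≤ t) (c : Fin t) :
    Rcyc t b c - Rcyc t a c = if a ≤ c ∧ (c : ℕ) < b then -2 else 0 := by
  rw [Rcyc_of_le hb, Rcyc_of_le (hab.trans hb)]
  split_ifs <;> first | (exfalso; omega) | norm_num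

section GappedIntervals

variable {ρ : ℕ} {ii jj : Fin ρ → ℕ} (hle : ∀ k, ii k ≤ jj k)
  (hgap : ∀ k : Fin ρ, ∀ h : (k : ℕ) + 1 < ρ, jj k + 2 ≤ ii ⟨(k : ℕ) + 1, h⟩)
include hle hgap

theorem jj_lt_ii_of_lt {r s : Fin ρ} (hrs : r < s) : jj r < ii s := by
  obtain ⟨s, hs⟩ := s
  change (r : ℕ) + 1 ≤ s at hrs
  revert hs
  induction s, hrs using Nat.le_induction with
  | base => intro hs; have := hgap r hs; omega
  | succ n _ ih =>
    intro hs
    have hn : (n : ℕ) < ρ := by omega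
    have := ih hn
    have := hle ⟨n, hn⟩
    have : jj ⟨n, hn⟩ + 2 ≤ ii ⟨n + 1, hs⟩ := hgap ⟨n, hn⟩ hs
    omega

theorem eq_of_mem_gapped_intervals {c : ℕ} {r s : Fin ρ} (hr : ii r ≤ c ∧ c ≤ jj r)
    (hs : ii s ≤ c ∧ c ≤ jj s) : r = s := by
  rcases lt_trichotomy r s with h | h | h
  · have := jj_lt_ii_of_lt hle hgap h; omega
  · exact h
  · have := jj_lt_ii_of_lt hle hgap h; omega

end GappedIntervals

theorem stmt_17 (t : ℕ) (ht : 4 ≤ t) (hev : Even t)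
    (ρ : ℕ)
    (ii jj : Fin ρ → ℕ)
    -- each interval [i_k, j_k] satisfies 1 ≤ i_k ≤ j_k < t (so t ∉ A)
    (hb : ∀ k, 1 ≤ ii k ∧ ii k ≤ jj k ∧ jj k < t)
    -- consecutive intervals are nonadjacent: j_k + 2 ≤ i_{k+1}
    (hgap : ∀ k : Fin ρ, ∀ h : (k : ℕ) + 1 < ρ, jj k + 2 ≤ ii ⟨(k : ℕ) + 1, h⟩) :
    -- _{−A}T^{(+)} = ( P(t)^1 + Σ_{k=1}^{ρ} P(t)^{j_k+1} − Σ_{ℓ=1}^{ρ} P(t)^{i_ℓ} ) · W(R)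
    (fun c : Fin t =>
        if ∃ k, ii k ≤ (c : ℕ) + 1 ∧ (c : ℕ) + 1 ≤ jj k then (-1 : ℝ) else 1) =
      Matrix.vecMul
        (fun c =>
          Pmat t ⟨0, by omega⟩ c +
          (∑ k : Fin ρ, Pmat t ⟨jj k, (hb k).2.2⟩ c) -
          ∑ k : Fin ρ, Pmat t ⟨ii k - 1, by obtain ⟨a, b, c'⟩ := hb k; omega⟩ c)
        (Wmat t) := by
  -- fold the coefficients into `P^0 + Σ P^{j_k} - Σ P^{i_k - 1}`, so that `ᵥ*` distributes
  simp only [← Pi.add_apply, ← Pi.sub_apply, ← Finset.sum_apply]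
  rw [sub_vecMul, add_vecMul, sum_vecMul, sum_vecMul]
  ext c
  simp only [Pmat_row_vecMul_Wmat hev, Pi.add_apply, Pi.sub_apply, Finset.sum_apply]
  rw [add_sub_assoc, ← sum_sub_distrib]
  have hterm (k : Fin ρ) : Rcyc t (jj k) c - Rcyc t (ii k - 1) c =
      if ii k ≤ (c : ℕ) + 1 ∧ (c : ℕ) + 1 ≤ jj k then -2 else 0 := by
    obtain ⟨hi, hij, hjt⟩ := hb k
    rw [Rcyc_sub_Rcyc (by omega) hjt.le]
    exact if_congr (by omega) rfl rfl
  rw [sum_congr rfl fun k _ => hterm k, sum_ite_eq_ite_exists _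
      fun _ _ => eq_of_mem_gapped_intervals (fun k => (hb k).2.1) hgap,
    Rcyc_of_le (Nat.zero_le t), if_neg (Nat.not_lt_zero _)]
  split_ifs <;> norm_num
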